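/- Let G9 be the interlacement graph of the matching L9 = { {0,5}, {1,8}, {2,9}, {3,14}, {4,15}, {6,13}, {7,12}, {10,17}, {11,16} } of {0,...,17}, with vertex set {0,...,8} where vertex i corresponds to the i-th chord in the listed order and vertices i, j are adjacent if and only if the corresponding chords are interlaced. Then G9 satisfies condition B3: for any three pairwise adjacent vertices a, b, c, the sum of the number of vertices w (with w ≠ b and w ≠ c) adjacent to a but adjacent to neither b nor c, and the number of vertices w (with w ≠ a) adjacent to both b and c but not adjacent to a, is even. -/

import Mathlib

/-- Two sorted pairs (chords) are interlaced. -/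
def Interlaced (p q : ℕ × ℕ) : Prop :=
  (p.1 < q.1 ∧ q.1 < p.2 ∧ p.2 < q.2) ∨ (q.1 < p.1 ∧ p.1 < q.2 ∧ q.2 < p.2)

/-- Interlacement graph of a tuple of chords: vertex `i` corresponds to the `i`-th chord,
and two vertices are adjacent iff the corresponding chords are interlaced. -/
def interGraph {n : ℕ} (c : Fin n → ℕ × ℕ) : SimpleGraph (Fin n) where
  Adj i j := i ≠ j ∧ Interlaced (c i) (c j)
  symm := ⟨fun _ _ h => ⟨h.1.symm, Or.symm h.2⟩⟩
  loopless := ⟨fun _ h => h.1 rfl⟩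

/-- The chords of the matching `L9 = {{0,5},{1,8},{2,9},{3,14},{4,15},{6,13},{7,12},{10,17},{11,16}}`
of `{0, ..., 17}`, in the listed order. -/
def L9chords : Fin 9 → ℕ × ℕ :=
  ![(0, 5), (1, 8), (2, 9), (3, 14), (4, 15), (6, 13), (7, 12), (10, 17), (11, 16)]

/-- The interlacement graph of the matching `L9`. -/
def G9 : SimpleGraph (Fin 9) := interGraph L9chords

/-- Condition B3 (Biryukov): for any three pairwise adjacent vertices `a`, `b`, `c`,
the number of vertices `w ∉ {b, c}` adjacent to `a` but to neither `b` nor `c`, plus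
the number of vertices `w ≠ a` adjacent to both `b` and `c` but not to `a`, is even. -/
def CondB3 {V : Type*} (G : SimpleGraph V) : Prop :=
  ∀ a b c : V, G.Adj a b → G.Adj a c → G.Adj b c →
    Even ({w | w ≠ b ∧ w ≠ c ∧ G.Adj a w ∧ ¬ G.Adj b w ∧ ¬ G.Adj c w}.ncard +
          {w | w ≠ a ∧ ¬ G.Adj a w ∧ G.Adj b w ∧ G.Adj c w}.ncard)

instance : DecidableRel Interlaced := fun _ _ => inferInstanceAs (Decidable (_ ∨ _))

instance {n : ℕ} (c : Fin n → ℕ × ℕ) : DecidableRel (interGraph c).Adj :=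
  fun i j => inferInstanceAs (Decidable (i ≠ j ∧ Interlaced (c i) (c j)))

open Finset in
theorem condB3_iff_forall_even_card {V : Type*} [Fintype V] [DecidableEq V] (G : SimpleGraph V)
    [DecidableRel G.Adj] :
    CondB3 G ↔ ∀ a b c : V, G.Adj a b → G.Adj a c → G.Adj b c →
      Even (#{w | w ≠ b ∧ w ≠ c ∧ G.Adj a w ∧ ¬ G.Adj b w ∧ ¬ G.Adj c w} +
            #{w | w ≠ a ∧ ¬ G.Adj a w ∧ G.Adj b w ∧ G.Adj c w}) := by
  simp only [CondB3, Set.ncard_eq_toFinset_card', Set.toFinset_ofPred]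

instance {V : Type*} [Fintype V] [DecidableEq V] (G : SimpleGraph V) [DecidableRel G.Adj] :
    Decidable (CondB3 G) :=
  decidable_of_iff _ (condB3_iff_forall_even_card G).symm

/-- The interlacement graph `G9` of the matching `L9` satisfies condition B3. -/
theorem G9_condB3 : CondB3 G9 := by
  unfold G9
  decide
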